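/- arXiv:2008.06555 — 2 statements merged into one kernel-verified Lean document; each statement's English description precedes it below -/
import Mathlib

section
/- Under the sampling model, for all subsets π, π' ⊆ [n]: Var( μ̂_{π\π'} − μ̂_{π'\π} ) ≤ 4·|π Δ π'|·n/T, where Δ denotes symmetric difference. -/
/-!
Write the difference of the two estimators as `(n/T) ∑ₛ Zₛ` with
`Zₛ = Yₛ · (1{Iₛ ∈ π \ π'} - 1{Iₛ ∈ π' \ π})`. The `Zₛ` are independent, so the variance of the
sum is the sum of the variances, each bounded by the second moment
`𝔼[Zₛ²] = ∑_{i ∈ π Δ π'} 𝔼[Yₛ² ; Iₛ = i] ≤ ∑_{i ∈ π Δ π'} (1 + μᵢ²)/n ≤ 2 |π Δ π'| / n`.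
-/

open MeasureTheory ProbabilityTheory Finset

section SdiffSign

variable {α : Type*} [DecidableEq α]

def sdiffSign (A B : Finset α) (i : α) : ℝ :=
  (if i ∈ A \ B then 1 else 0) - (if i ∈ B \ A then 1 else 0)

lemma sdiffSign_sq (A B : Finset α) (i : α) :
    sdiffSign A B i ^ 2 = if i ∈ symmDiff A B then 1 else 0 := by
  by_cases hA : i ∈ A <;> by_cases hB : i ∈ B <;> simp [sdiffSign, mem_symmDiff, hA, hB]

lemma abs_mul_sdiffSign_le (y : ℝ) (A B : Finset α) (i : α) : |y * sdiffSign A B i| ≤ |y| := by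
  rw [abs_mul]
  refine mul_le_of_le_one_right (abs_nonneg y) ?_
  unfold sdiffSign
  split_ifs <;> norm_num

end SdiffSign

section SecondMoment

variable {Ω α : Type*} [MeasurableSpace Ω] [MeasurableSpace α] [MeasurableSingletonClass α]
  {P : Measure Ω} {X : Ω → α}

lemma setIntegral_preimage_finset_eq_sum (hX : Measurable X) {f : Ω → ℝ} (hf : Integrable f P)
    (S : Finset α) :
    ∫ ω in X ⁻¹' S, f ω ∂P = ∑ i ∈ S, ∫ ω in {ω | X ω = i}, f ω ∂P := by
  have hS : X ⁻¹' S = ⋃ i ∈ S, {ω | X ω = i} := by ext; simp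
  rw [hS, integral_biUnion_finset (s := fun i => {ω | X ω = i}) S
    (fun i _ => hX (measurableSet_singleton i)) ?_ (fun i _ => hf.integrableOn)]
  intro i _ j _ hij
  exact Set.disjoint_left.2 fun ω hi hj => hij (hi.symm.trans hj)

lemma integral_sq_mul_sdiffSign [DecidableEq α] (hX : Measurable X) {Y : Ω → ℝ}
    (hY : Integrable (fun ω => Y ω ^ 2) P) (A B : Finset α) :
    ∫ ω, (Y ω * sdiffSign A B (X ω)) ^ 2 ∂P
      = ∑ i ∈ symmDiff A B, ∫ ω in {ω | X ω = i}, Y ω ^ 2 ∂P := by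
  rw [← setIntegral_preimage_finset_eq_sum hX hY,
    ← integral_indicator (hX (symmDiff A B).measurableSet)]
  classical
  simp only [mul_pow, sdiffSign_sq, mul_ite, mul_one, mul_zero, Set.indicator_apply,
    Set.mem_preimage, mem_coe]

lemma integral_sq_mul_sdiffSign_le [DecidableEq α] (hX : Measurable X) {Y : Ω → ℝ}
    (hY : Integrable (fun ω => Y ω ^ 2) P) (A B : Finset α) {c : ℝ}
    (hc : ∀ i, ∫ ω in {ω | X ω = i}, Y ω ^ 2 ∂P ≤ c) :
    ∫ ω, (Y ω * sdiffSign A B (X ω)) ^ 2 ∂P ≤ #(symmDiff A B) * c := by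
  rw [integral_sq_mul_sdiffSign hX hY, ← nsmul_eq_mul, ← sum_const]
  exact sum_le_sum fun i _ => hc i

end SecondMoment

lemma variance_const_mul_sum_le {Ω ι : Type*} [MeasurableSpace Ω] {P : Measure Ω}
    [IsProbabilityMeasure P] [Fintype ι] {Z : ι → Ω → ℝ} (hZ : ∀ s, MemLp (Z s) 2 P)
    (hindep : iIndepFun Z P) {v : ℝ} (hv : ∀ s, ∫ ω, Z s ω ^ 2 ∂P ≤ v) (c : ℝ) :
    variance (fun ω => c * ∑ s, Z s ω) P ≤ c ^ 2 * (Fintype.card ι * v) := by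
  have hsum : (fun ω => ∑ s, Z s ω) = ∑ s, Z s := by ext; simp
  rw [variance_const_mul, hsum,
    IndepFun.variance_sum (fun s _ => hZ s) (fun s _ t _ hst => hindep.indepFun hst)]
  gcongr
  calc ∑ s, variance (Z s) P
      ≤ ∑ _s : ι, v := sum_le_sum fun s _ => (variance_le_expectation_sq (hZ s).1).trans (hv s)
    _ = Fintype.card ι * v := by simp

/-- No side conditions: both sides vanish when `n = 0` or `T = 0`, as `x / 0 = 0`. -/
lemma div_sq_mul_mul_div {𝕜 : Type*} [Field 𝕜] (n T a : 𝕜) :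
    (n / T) ^ 2 * (T * (a / n)) = a * n / T := by
  rcases eq_or_ne n 0 with rfl | hn
  · simp
  rcases eq_or_ne T 0 with rfl | hT
  · simp
  field_simp

theorem stmt3_general {Ω : Type*} [MeasureSpace Ω] [IsProbabilityMeasure (ℙ : Measure Ω)]
    (n T : ℕ)
    (I : Fin T → Ω → Fin n) (Y : Fin T → Ω → ℝ)
    (hImeas : ∀ s, Measurable (I s)) (hYmeas : ∀ s, Measurable (Y s))
    (hYbd : ∀ s ω, |Y s ω| ≤ 1)
    (μ : Fin n → ℝ) (hμ : ∀ i, μ i ∈ Set.Icc (-1 : ℝ) 1)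
    (hindep : iIndepFun (fun s ω => (I s ω, Y s ω)) ℙ)
    (hvar : ∀ (s : Fin T) (i : Fin n),
      (∫ ω in {ω | I s ω = i}, (Y s ω) ^ 2) ≤ (1 + μ i ^ 2) / n)
    (π π' : Finset (Fin n)) :
    variance (fun ω =>
        ((n : ℝ) / T) * ∑ s, Y s ω * (if I s ω ∈ π \ π' then (1 : ℝ) else 0)
        - ((n : ℝ) / T) * ∑ s, Y s ω * (if I s ω ∈ π' \ π then (1 : ℝ) else 0)) ℙ
      ≤ 4 * (symmDiff π π').card * n / T := by
  set Z : Fin T → Ω → ℝ := fun s ω => Y s ω * sdiffSign π π' (I s ω)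
  have hsign : Measurable (sdiffSign π π') := measurable_of_finite _
  have hY_memLp s : MemLp (Y s) 2 ℙ :=
    .of_bound (hYmeas s).aestronglyMeasurable 1 (ae_of_all _ (hYbd s))
  have hZ_memLp s : MemLp (Z s) 2 ℙ :=
    .of_bound ((hYmeas s).mul (hsign.comp (hImeas s)) :).aestronglyMeasurable 1
      (ae_of_all _ fun ω => (abs_mul_sdiffSign_le _ _ _ _).trans (hYbd s ω))
  have hZ_indep : iIndepFun Z ℙ :=
    hindep.comp (fun _ p => p.2 * sdiffSign π π' p.1)
      (fun _ => (measurable_snd.mul (hsign.comp measurable_fst) :))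
  have hZ_sq s : ∫ ω, Z s ω ^ 2 ≤ #(symmDiff π π') * (2 / n) :=
    integral_sq_mul_sdiffSign_le (hImeas s) (hY_memLp s).integrable_sq π π' fun i =>
      (hvar s i).trans (by gcongr; nlinarith [(hμ i).1, (hμ i).2])
  have hdiff : (fun ω =>
        ((n : ℝ) / T) * ∑ s, Y s ω * (if I s ω ∈ π \ π' then (1 : ℝ) else 0)
        - ((n : ℝ) / T) * ∑ s, Y s ω * (if I s ω ∈ π' \ π then (1 : ℝ) else 0))
      = fun ω => ((n : ℝ) / T) * ∑ s, Z s ω := by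
    funext ω
    simp only [Z, sdiffSign, mul_sub, sum_sub_distrib]
  rw [hdiff]
  calc _ ≤ ((n : ℝ) / T) ^ 2 * (T * (#(symmDiff π π') * (2 / n))) := by
        simpa using variance_const_mul_sum_le hZ_memLp hZ_indep hZ_sq ((n : ℝ) / T)
    _ = 2 * #(symmDiff π π') * n / T := by
        rw [mul_div_assoc', div_sq_mul_mul_div, mul_comm (#(symmDiff π π') : ℝ) 2]
    _ ≤ 4 * (symmDiff π π').card * n / T := by gcongr; norm_num

/-- Under the i.i.d. sampling model, for all `π, π' ⊆ [n]`,
`Var( μ̂_{π\π'} − μ̂_{π'\π} ) ≤ 4·|π Δ π'|·n/T` where `Δ` is symmetric difference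
and `μ̂_S = (n/T) Σ_s Y_s·1{I_s ∈ S}`. -/
theorem stmt3 {Ω : Type*} [MeasureSpace Ω] [IsProbabilityMeasure (ℙ : Measure Ω)]
    (n T : ℕ) (hn : 1 ≤ n) (hT : 1 ≤ T)
    (I : Fin T → Ω → Fin n) (Y : Fin T → Ω → ℝ)
    (hImeas : ∀ s, Measurable (I s)) (hYmeas : ∀ s, Measurable (Y s))
    (hYbd : ∀ s ω, |Y s ω| ≤ 1)
    (μ : Fin n → ℝ) (hμ : ∀ i, μ i ∈ Set.Icc (-1 : ℝ) 1)
    (hindep : iIndepFun (fun s ω => (I s ω, Y s ω)) ℙ)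
    (hident : ∀ s t : Fin T,
      IdentDistrib (fun ω => (I s ω, Y s ω)) (fun ω => (I t ω, Y t ω)) ℙ ℙ)
    (hunif : ∀ (s : Fin T) (i : Fin n), ℙ {ω | I s ω = i} = (n : ENNReal)⁻¹)
    (hcond : ∀ (s : Fin T) (i : Fin n), (∫ ω in {ω | I s ω = i}, Y s ω) = μ i / n)
    (hvar : ∀ (s : Fin T) (i : Fin n),
      (∫ ω in {ω | I s ω = i}, (Y s ω) ^ 2) ≤ (1 + μ i ^ 2) / n)
    (π π' : Finset (Fin n)) :
    variance (fun ω =>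
        ((n : ℝ) / T) * ∑ s, Y s ω * (if I s ω ∈ π \ π' then (1 : ℝ) else 0)
        - ((n : ℝ) / T) * ∑ s, Y s ω * (if I s ω ∈ π' \ π then (1 : ℝ) else 0)) ℙ
      ≤ 4 * (symmDiff π π').card * n / T :=
  stmt3_general n T I Y hImeas hYmeas hYbd μ hμ hindep hvar π π'
end

section
/- There exists a universal constant c > 0 with the following property (persistent-noise / sampling-without-replacement confidence bound). For every n ≥ 1, every family Π ⊆ 2^{[n]}, every fixed vector of deterministic values μ_i ∈ [−1,1], every 1 ≤ T ≤ n and every δ ∈ (0,1): if I_1,…,I_T are sampled uniformly at random without replacement from [n] and μ̂_π := (n/T) Σ_{s=1}^T μ_{I_s}·1{I_s ∈ π}, then with probability at least 1 − δ, simultaneously for all π ∈ Π, | μ̂_π − μ_π | ≤ c·( √( |π| · n · Ṽ_π · ln(e·n/δ) / T ) + n · Ṽ_π · ln(e·n/δ) / T ), where μ_π := Σ_{i∈π} μ_i and Ṽ_π := max{ 1, min{ VC(B_1(|π|)), |π| } }. -/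
/-!
A uniformly random `T`-subset `S` of `[n]` contains a fixed set `t` with probability at most
`(T/n)^|t|`. Expanding `∏_{i ∈ π} f_i(1{i ∈ S})` over subsets `t ⊆ π` shows that such products,
for factors `f_i ≥ 0` that are all increasing (or, passing to complements, all decreasing), have
expectation at most the one under independent Bernoulli(`T/n`) coordinates. This yields the
with-replacement Chernoff bounds for `∑_{i ∈ S ∩ π} ν_i` with `ν ∈ [0,1]`, hence, splitting
`μ = μ⁺ - μ⁻`, a failure probability `4 e^{-4 Ṽ_π L}` for each `π` at the radius
`10 (√(|π| n Ṽ_π L / T) + n Ṽ_π L / T)`, where `L = ln (e n / δ)`. By Sauer–Shelah the members of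
`ℱ` of a given size `k` number at most `(n + 1)^{Ṽ} ≤ e^{Ṽ L}`, so a union bound over `ℱ`, grouped
by size, costs at most `4 (n + 1) e^{-3L} ≤ δ`. Finally, the image of the injective tuple
`(I_1, …, I_T)` is a uniform `T`-subset, and on it `μ̂_π` is the rescaled sum over `S ∩ π`.
-/

open MeasureTheory ProbabilityTheory Finset

theorem Nat.descFactorial_mul_pow_le_descFactorial_mul_pow {T n : ℕ} (hTn : T ≤ n) (b : ℕ) :
    T.descFactorial b * n ^ b ≤ n.descFactorial b * T ^ b := by
  have hpow (m : ℕ) : m ^ b = ∏ _i ∈ range b, m := by simp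
  rw [Nat.descFactorial_eq_prod_range, Nat.descFactorial_eq_prod_range, hpow n, hpow T,
    ← prod_mul_distrib, ← prod_mul_distrib]
  refine prod_le_prod' fun i _ => ?_
  rw [Nat.sub_mul, Nat.sub_mul, mul_comm T n]
  exact Nat.sub_le_sub_left (Nat.mul_le_mul_left i hTn) _

theorem Nat.choose_sub_mul_pow_le {b T n : ℕ} (hbT : b ≤ T) (hTn : T ≤ n) :
    (n - b).choose (T - b) * n ^ b ≤ n.choose T * T ^ b := by
  have hpos : 0 < b.factorial * n.choose b :=
    Nat.mul_pos b.factorial_pos (Nat.choose_pos (hbT.trans hTn))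
  refine Nat.le_of_mul_le_mul_left ?_ hpos
  calc b.factorial * n.choose b * ((n - b).choose (T - b) * n ^ b)
      = n.choose T * (b.factorial * T.choose b * n ^ b) := by
        rw [show n.choose T * (b.factorial * T.choose b * n ^ b)
          = b.factorial * n ^ b * (n.choose T * T.choose b) by ring, Nat.choose_mul hbT]
        ring
    _ ≤ n.choose T * (b.factorial * n.choose b * T ^ b) := by
        refine Nat.mul_le_mul_left _ ?_
        simpa only [Nat.descFactorial_eq_factorial_mul_choose] using
          Nat.descFactorial_mul_pow_le_descFactorial_mul_pow hTn b
    _ = b.factorial * n.choose b * (n.choose T * T ^ b) := by ring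

theorem card_filter_le_abs_le {ι : Type*} [DecidableEq ι] (s : Finset ι) (f : ι → ℝ) (x : ℝ) :
    #{i ∈ s | x ≤ |f i|} ≤ #{i ∈ s | x ≤ f i} + #{i ∈ s | x ≤ -f i} := by
  refine le_trans ?_ (card_union_le _ _)
  rw [← filter_or]
  exact card_le_card (monotone_filter_right _ fun i _ hi => le_abs.1 hi)

theorem card_filter_lt_abs_sub_le {ι : Type*} [DecidableEq ι] (s : Finset ι) (f g : ι → ℝ) (r : ℝ) :
    #{i ∈ s | 2 * r < |f i - g i|} ≤ #{i ∈ s | r ≤ |f i|} + #{i ∈ s | r ≤ |g i|} := by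
  refine le_trans ?_ (card_union_le _ _)
  rw [← filter_or]
  refine card_le_card (monotone_filter_right _ fun i _ hi => ?_)
  by_contra! h
  linarith [abs_sub (f i) (g i)]

open Real in
theorem card_filter_le_sum_exp_mul_sub {ι : Type*} (s : Finset ι) (f : ι → ℝ) (x : ℝ) {θ : ℝ}
    (hθ : 0 ≤ θ) : (#{i ∈ s | x ≤ f i} : ℝ) ≤ ∑ i ∈ s, exp (θ * (f i - x)) := by
  rw [card_eq_sum_ones, Nat.cast_sum, Nat.cast_one]
  refine (sum_le_sum fun i hi => one_le_exp ?_).trans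
    (sum_le_sum_of_subset_of_nonneg (filter_subset _ _) fun _ _ _ => (exp_pos _).le)
  exact mul_nonneg hθ (sub_nonneg.2 (mem_filter.1 hi).2)

-- `θ = min 1 √(A / s)`.
theorem exists_sq_mul_le_and_le_mul_sqrt_add {s A : ℝ} (hs : 0 ≤ s) (hA : 0 ≤ A) :
    ∃ θ : ℝ, 0 ≤ θ ∧ θ ≤ 1 ∧ θ ^ 2 * s ≤ A ∧ A ≤ θ * (√(s * A) + A) := by
  rcases le_or_gt s A with hsA | hAs
  · exact ⟨1, zero_le_one, le_rfl, by simpa using hsA, by simp [Real.sqrt_nonneg]⟩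
  have hs0 : 0 < s := hA.trans_lt hAs
  refine ⟨√(A / s), Real.sqrt_nonneg _, Real.sqrt_le_one.2 ((div_le_one hs0).2 hAs.le), ?_, ?_⟩
  · rw [Real.sq_sqrt (div_nonneg hA hs), div_mul_cancel₀ A hs0.ne']
  · rw [mul_add, ← Real.sqrt_mul (div_nonneg hA hs),
      show A / s * (s * A) = A ^ 2 by field_simp, Real.sqrt_sq hA]
    exact le_add_of_nonneg_right (mul_nonneg (Real.sqrt_nonneg _) hA)

section UniformSubset

variable {α : Type*} [Fintype α] [DecidableEq α]

theorem card_filter_subset_powersetCard_le {T : ℕ} (hT : T ≤ Fintype.card α) (t : Finset α) :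
    (#{S ∈ powersetCard T (univ : Finset α) | t ⊆ S} : ℝ)
      ≤ (Fintype.card α).choose T * ((T : ℝ) / Fintype.card α) ^ #t := by
  by_cases htT : #t ≤ T
  · rw [card_filter_powersetCard_subset t univ T (subset_univ t) htT, card_univ]
    rcases (#t).eq_zero_or_pos with h0 | hpos
    · simp [h0]
    have hn : (0 : ℝ) < (Fintype.card α : ℝ) ^ #t := by
      have : 0 < Fintype.card α := hpos.trans_le (htT.trans hT)
      positivity
    rw [div_pow, ← mul_div_assoc, le_div_iff₀ hn]
    exact_mod_cast Nat.choose_sub_mul_pow_le htT hT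
  · have : {S ∈ powersetCard T (univ : Finset α) | t ⊆ S} = ∅ :=
      filter_eq_empty_iff.2 fun S hS htS =>
        htT ((card_le_card htS).trans (mem_powersetCard.1 hS).2.le)
    rw [this, card_empty, Nat.cast_zero]
    positivity

-- Expanding the product over `t ⊆ Q` leaves only the events `t ⊆ S`, whose probability is at
-- most `(T/n)^|t|`: the bound is the one for independent Bernoulli(`T/n`) coordinates.
theorem sum_prod_ite_mem_le_of_le {T : ℕ} (hT : T ≤ Fintype.card α) {Q : Finset α}
    {a b : α → ℝ} (hb : ∀ i ∈ Q, 0 ≤ b i) (hba : ∀ i ∈ Q, b i ≤ a i) :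
    ∑ S ∈ powersetCard T univ, ∏ i ∈ Q, (if i ∈ S then a i else b i)
      ≤ (Fintype.card α).choose T *
          ∏ i ∈ Q, ((T : ℝ) / Fintype.card α * a i + (1 - T / Fintype.card α) * b i) := by
  set p : ℝ := T / Fintype.card α
  have hexpand (S : Finset α) : ∏ i ∈ Q, (if i ∈ S then a i else b i)
      = ∑ t ∈ Q.powerset, (if t ⊆ S then ∏ i ∈ t, (a i - b i) else 0) * ∏ i ∈ Q \ t, b i := by
    calc ∏ i ∈ Q, (if i ∈ S then a i else b i)
        = ∏ i ∈ Q, ((if i ∈ S then a i - b i else 0) + b i) :=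
          prod_congr rfl fun i _ => by split_ifs <;> ring
      _ = _ := by rw [prod_add]; simp_rw [prod_ite_zero]; rfl
  have hcollect : ∏ i ∈ Q, (p * a i + (1 - p) * b i)
      = ∑ t ∈ Q.powerset, p ^ #t * ((∏ i ∈ t, (a i - b i)) * ∏ i ∈ Q \ t, b i) := by
    calc ∏ i ∈ Q, (p * a i + (1 - p) * b i) = ∏ i ∈ Q, (p * (a i - b i) + b i) :=
          prod_congr rfl fun i _ => by ring
      _ = _ := by
          rw [prod_add]
          exact sum_congr rfl fun t _ => by rw [prod_mul_distrib, prod_const]; ring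
  calc ∑ S ∈ powersetCard T univ, ∏ i ∈ Q, (if i ∈ S then a i else b i)
      = ∑ t ∈ Q.powerset, #{S ∈ powersetCard T univ | t ⊆ S}
          * ((∏ i ∈ t, (a i - b i)) * ∏ i ∈ Q \ t, b i) := by
        simp_rw [hexpand, ite_mul, zero_mul]
        rw [sum_comm]
        simp_rw [← sum_filter, sum_const, nsmul_eq_mul]
    _ ≤ ∑ t ∈ Q.powerset, (Fintype.card α).choose T * p ^ #t
          * ((∏ i ∈ t, (a i - b i)) * ∏ i ∈ Q \ t, b i) := by
        refine sum_le_sum fun t ht => mul_le_mul_of_nonneg_right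
          (card_filter_subset_powersetCard_le hT t) ?_
        have htQ := mem_powerset.1 ht
        exact mul_nonneg (prod_nonneg fun i hi => sub_nonneg.2 (hba i (htQ hi)))
          (prod_nonneg fun i hi => hb i (mem_sdiff.1 hi).1)
    _ = _ := by rw [hcollect, mul_sum]; simp_rw [mul_assoc]

theorem sum_powersetCard_compl {M : Type*} [AddCommMonoid M] {T : ℕ} (hT : T ≤ Fintype.card α)
    (g : Finset α → M) :
    ∑ S ∈ powersetCard T univ, g S = ∑ S ∈ powersetCard (Fintype.card α - T) univ, g Sᶜ :=
  sum_nbij' compl compl (fun S hS => by simp_all [card_compl])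
    (fun S hS => by simp_all [card_compl, Nat.sub_sub_self hT]) (fun S _ => compl_compl S)
    (fun S _ => compl_compl S) (fun S _ => by rw [compl_compl])

theorem sum_prod_ite_mem_le_of_ge {T : ℕ} (hT : T ≤ Fintype.card α) {Q : Finset α}
    {a b : α → ℝ} (ha : ∀ i ∈ Q, 0 ≤ a i) (hab : ∀ i ∈ Q, a i ≤ b i) :
    ∑ S ∈ powersetCard T univ, ∏ i ∈ Q, (if i ∈ S then a i else b i)
      ≤ (Fintype.card α).choose T *
          ∏ i ∈ Q, ((T : ℝ) / Fintype.card α * a i + (1 - T / Fintype.card α) * b i) := by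
  rcases (Fintype.card α).eq_zero_or_pos with hn | hn
  · have : IsEmpty α := Fintype.card_eq_zero_iff.1 hn
    simp [Subsingleton.elim Q ∅]
  rw [sum_powersetCard_compl hT]
  simp_rw [mem_compl, ite_not]
  calc _ ≤ (Fintype.card α).choose (Fintype.card α - T) *
          ∏ i ∈ Q, (((Fintype.card α - T : ℕ) : ℝ) / Fintype.card α * b i
            + (1 - ((Fintype.card α - T : ℕ) : ℝ) / Fintype.card α) * a i) :=
        sum_prod_ite_mem_le_of_le (Nat.sub_le _ _) ha hab
    _ = _ := by
        rw [Nat.choose_symm hT, Nat.cast_sub hT]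
        congr 1
        refine prod_congr rfl fun i _ => ?_
        field_simp
        ring

open Real in
theorem sum_exp_mul_sum_inter_le {T : ℕ} (hT : T ≤ Fintype.card α) {Q : Finset α} {ν : α → ℝ}
    (hν : ∀ i ∈ Q, ν i ∈ Set.Icc 0 1) {θ : ℝ} (hθ : |θ| ≤ 1) :
    ∑ S ∈ powersetCard T univ, exp (θ * ∑ i ∈ S ∩ Q, ν i)
      ≤ (Fintype.card α).choose T * exp (θ * ((T : ℝ) / Fintype.card α * ∑ i ∈ Q, ν i)
          + θ ^ 2 * ((T : ℝ) / Fintype.card α * #Q)) := by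
  set p : ℝ := T / Fintype.card α
  have hp0 : 0 ≤ p := by positivity
  have hp1 : p ≤ 1 := div_le_one_of_le₀ (by exact_mod_cast hT) (Nat.cast_nonneg _)
  have hprod (S : Finset α) :
      exp (θ * ∑ i ∈ S ∩ Q, ν i) = ∏ i ∈ Q, (if i ∈ S then exp (θ * ν i) else 1) := by
    rw [prod_ite_mem, inter_comm, mul_sum, exp_sum]
  have hfactor : ∀ i ∈ Q, p * exp (θ * ν i) + (1 - p) * 1 ≤ exp (p * (θ * ν i + θ ^ 2)) := by
    intro i hi
    obtain ⟨hν0, hν1⟩ := hν i hi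
    have hy : |θ * ν i| ≤ 1 := by
      rw [abs_mul, abs_of_nonneg hν0]; nlinarith [abs_nonneg θ]
    have hsq : (θ * ν i) ^ 2 ≤ θ ^ 2 := by
      rw [mul_pow]; exact mul_le_of_le_one_right (sq_nonneg θ) (pow_le_one₀ hν0 hν1)
    have hexp := (abs_le.1 (abs_exp_sub_one_sub_id_le hy)).2
    nlinarith [add_one_le_exp (p * (θ * ν i + θ ^ 2))]
  calc ∑ S ∈ powersetCard T univ, exp (θ * ∑ i ∈ S ∩ Q, ν i)
      = ∑ S ∈ powersetCard T univ, ∏ i ∈ Q, (if i ∈ S then exp (θ * ν i) else 1) := by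
        simp_rw [hprod]
    _ ≤ (Fintype.card α).choose T * ∏ i ∈ Q, (p * exp (θ * ν i) + (1 - p) * 1) := by
        rcases le_total 0 θ with h | h
        · exact sum_prod_ite_mem_le_of_le hT (fun _ _ => zero_le_one)
            fun i hi => one_le_exp (mul_nonneg h (hν i hi).1)
        · exact sum_prod_ite_mem_le_of_ge hT (fun _ _ => (exp_pos _).le)
            fun i hi => exp_le_one_iff.2 (mul_nonpos_of_nonpos_of_nonneg h (hν i hi).1)
    _ ≤ (Fintype.card α).choose T * ∏ i ∈ Q, exp (p * (θ * ν i + θ ^ 2)) := by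
        gcongr with i hi
        exact hfactor i hi
    _ = _ := by
        rw [← exp_sum, sum_congr rfl fun i _ => mul_add p (θ * ν i) (θ ^ 2), sum_add_distrib,
          sum_const, nsmul_eq_mul, ← mul_sum, ← mul_sum]
        ring_nf

open Real in
theorem card_filter_le_abs_sum_inter_sub_le {T : ℕ} (hT : T ≤ Fintype.card α) {Q : Finset α}
    {ν : α → ℝ} (hν : ∀ i ∈ Q, ν i ∈ Set.Icc 0 1) {θ : ℝ} (hθ0 : 0 ≤ θ) (hθ1 : θ ≤ 1) (x : ℝ) :
    (#{S ∈ powersetCard T univ |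
        x ≤ |∑ i ∈ S ∩ Q, ν i - (T : ℝ) / Fintype.card α * ∑ i ∈ Q, ν i|} : ℝ)
      ≤ 2 * (Fintype.card α).choose T
          * exp (θ ^ 2 * ((T : ℝ) / Fintype.card α * #Q) - θ * x) := by
  set p : ℝ := T / Fintype.card α
  set m := p * ∑ i ∈ Q, ν i
  have htail (σ : ℝ) (hσ : |σ| ≤ 1) :
      ∑ S ∈ powersetCard T univ, exp (σ * (∑ i ∈ S ∩ Q, ν i - m) - θ * x)
        ≤ (Fintype.card α).choose T * exp (σ ^ 2 * (p * #Q) - θ * x) :=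
    calc _ = exp (-(σ * m) - θ * x) * ∑ S ∈ powersetCard T univ, exp (σ * ∑ i ∈ S ∩ Q, ν i) := by
          rw [mul_sum]
          exact sum_congr rfl fun S _ => by rw [← exp_add]; ring_nf
      _ ≤ exp (-(σ * m) - θ * x)
            * ((Fintype.card α).choose T * exp (σ * m + σ ^ 2 * (p * #Q))) :=
          mul_le_mul_of_nonneg_left (sum_exp_mul_sum_inter_le hT hν hσ) (exp_pos _).le
      _ = _ := by rw [mul_left_comm, ← exp_add]; ring_nf
  calc _ ≤ (#{S ∈ powersetCard T univ | x ≤ ∑ i ∈ S ∩ Q, ν i - m} : ℝ)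
        + #{S ∈ powersetCard T univ | x ≤ -(∑ i ∈ S ∩ Q, ν i - m)} := by
        exact_mod_cast card_filter_le_abs_le _ _ x
    _ ≤ ∑ S ∈ powersetCard T univ, exp (θ * (∑ i ∈ S ∩ Q, ν i - m) - θ * x)
        + ∑ S ∈ powersetCard T univ, exp (-θ * (∑ i ∈ S ∩ Q, ν i - m) - θ * x) := by
        gcongr <;> refine (card_filter_le_sum_exp_mul_sub _ _ x hθ0).trans_eq
          (sum_congr rfl fun S _ => by ring_nf)
    _ ≤ _ := add_le_add (htail θ (abs_le.2 ⟨by linarith, hθ1⟩))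
        (htail (-θ) (abs_le.2 ⟨by linarith, by linarith⟩))
    _ = _ := by rw [neg_sq]; ring

open Real in
theorem card_filter_le_abs_sum_inter_sub_le_exp {T : ℕ} (hT : T ≤ Fintype.card α)
    {Q : Finset α} {ν : α → ℝ} (hν : ∀ i ∈ Q, ν i ∈ Set.Icc 0 1) {A K : ℝ} (hA : 0 ≤ A)
    (hK : 0 ≤ K) :
    (#{S ∈ powersetCard T univ | K * (√((T : ℝ) / Fintype.card α * #Q * A) + A)
        ≤ |∑ i ∈ S ∩ Q, ν i - (T : ℝ) / Fintype.card α * ∑ i ∈ Q, ν i|} : ℝ)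
      ≤ 2 * (Fintype.card α).choose T * exp (A - K * A) := by
  obtain ⟨θ, hθ0, hθ1, hsq, hlin⟩ :=
    exists_sq_mul_le_and_le_mul_sqrt_add (s := (T : ℝ) / Fintype.card α * #Q) (by positivity) hA
  refine (card_filter_le_abs_sum_inter_sub_le hT hν hθ0 hθ1 _).trans ?_
  refine mul_le_mul_of_nonneg_left (exp_le_exp.2 ?_) (by positivity)
  nlinarith [mul_le_mul_of_nonneg_left hlin hK]

-- The comparison with independent coordinates needs factors that are all increasing or all
-- decreasing, hence the split `μ = μ⁺ - μ⁻` into two functions with values in `[0, 1]`.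
open Real in
theorem card_filter_lt_abs_sum_inter_sub_le_exp {T : ℕ} (hT : T ≤ Fintype.card α)
    {Q : Finset α} {μ : α → ℝ} (hμ : ∀ i ∈ Q, μ i ∈ Set.Icc (-1) 1) {A K : ℝ} (hA : 0 ≤ A)
    (hK : 0 ≤ K) :
    (#{S ∈ powersetCard T univ | 2 * K * (√((T : ℝ) / Fintype.card α * #Q * A) + A)
        < |∑ i ∈ S ∩ Q, μ i - (T : ℝ) / Fintype.card α * ∑ i ∈ Q, μ i|} : ℝ)
      ≤ 4 * (Fintype.card α).choose T * exp (A - K * A) := by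
  set p : ℝ := T / Fintype.card α
  have hdecomp (s : Finset α) : ∑ i ∈ s, μ i = ∑ i ∈ s, (μ i)⁺ - ∑ i ∈ s, (μ i)⁻ := by
    rw [← sum_sub_distrib]; simp_rw [posPart_sub_negPart]
  have hdev (S : Finset α) : ∑ i ∈ S ∩ Q, μ i - p * ∑ i ∈ Q, μ i
      = (∑ i ∈ S ∩ Q, (μ i)⁺ - p * ∑ i ∈ Q, (μ i)⁺)
        - (∑ i ∈ S ∩ Q, (μ i)⁻ - p * ∑ i ∈ Q, (μ i)⁻) := by
    rw [hdecomp, hdecomp]; ring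
  have hpos : ∀ i ∈ Q, (μ i)⁺ ∈ Set.Icc 0 1 := fun i hi =>
    ⟨posPart_nonneg _, sup_le (hμ i hi).2 zero_le_one⟩
  have hneg : ∀ i ∈ Q, (μ i)⁻ ∈ Set.Icc 0 1 := fun i hi =>
    ⟨negPart_nonneg _, sup_le (neg_le.1 (hμ i hi).1) zero_le_one⟩
  calc _ ≤ (#{S ∈ powersetCard T univ | K * (√(p * #Q * A) + A)
          ≤ |∑ i ∈ S ∩ Q, (μ i)⁺ - p * ∑ i ∈ Q, (μ i)⁺|} : ℝ)
        + #{S ∈ powersetCard T univ | K * (√(p * #Q * A) + A)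
          ≤ |∑ i ∈ S ∩ Q, (μ i)⁻ - p * ∑ i ∈ Q, (μ i)⁻|} := by
        simp_rw [hdev, mul_assoc 2 K]
        exact_mod_cast card_filter_lt_abs_sub_le _ _ _ _
    _ ≤ 2 * (Fintype.card α).choose T * exp (A - K * A)
        + 2 * (Fintype.card α).choose T * exp (A - K * A) :=
        add_le_add (card_filter_le_abs_sum_inter_sub_le_exp hT hpos hA hK)
          (card_filter_le_abs_sum_inter_sub_le_exp hT hneg hA hK)
    _ = _ := by ring

end UniformSubset

noncomputable def confidenceRadius (n T k V : ℕ) (L : ℝ) : ℝ :=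
  Real.sqrt ((k : ℝ) * n * V * L / T) + (n : ℝ) * V * L / T

theorem confidenceRadius_eq {n T : ℕ} (hn : 0 < n) (hT : 0 < T) (k V : ℕ) (L : ℝ) :
    confidenceRadius n T k V L = n / T * (√((T : ℝ) / n * k * (V * L)) + V * L) := by
  have hsqrt : (n : ℝ) / T * √((T : ℝ) / n * k * (V * L)) = √((k : ℝ) * n * V * L / T) := by
    rw [← Real.sqrt_sq (by positivity : (0 : ℝ) ≤ n / T), ← Real.sqrt_mul (sq_nonneg _)]
    congr 1
    field_simp
  rw [confidenceRadius, mul_add, hsqrt]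
  ring

open Real in
theorem log_confidence_bounds {n : ℕ} (hn : 1 ≤ n) {δ : ℝ} (hδ0 : 0 < δ) (hδ1 : δ ≤ 1) :
    0 ≤ log (exp 1 * n / δ) ∧ (n : ℝ) + 1 ≤ exp (log (exp 1 * n / δ))
      ∧ 4 * ((n : ℝ) + 1) * exp (-3 * log (exp 1 * n / δ)) ≤ δ := by
  set Λ := exp 1 * n / δ
  have he : 2 ≤ exp 1 := by linarith [add_one_le_exp (1 : ℝ)]
  have hn' : (1 : ℝ) ≤ n := by exact_mod_cast hn
  have hΛ : (n : ℝ) + 1 ≤ Λ :=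
    calc (n : ℝ) + 1 ≤ exp 1 * n := by nlinarith
      _ ≤ Λ := le_div_self (by positivity) hδ0 hδ1
  have hΛ0 : 0 < Λ := by linarith
  have hδΛ : 4 ≤ δ * Λ ^ 2 :=
    calc (4 : ℝ) ≤ (exp 1 * n) ^ 2 := by nlinarith [show 2 ≤ exp 1 * n by nlinarith]
      _ ≤ (exp 1 * n) ^ 2 / δ := le_div_self (by positivity) hδ0 hδ1
      _ = δ * Λ ^ 2 := by simp only [Λ]; field_simp
  refine ⟨log_nonneg (by linarith), (exp_log hΛ0).symm ▸ hΛ, ?_⟩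
  rw [show -3 * log Λ = -(3 * log Λ) by ring, exp_neg,
    show exp (3 * log Λ) = Λ ^ 3 by rw [← exp_log (pow_pos hΛ0 3), log_pow]; norm_num,
    ← div_eq_mul_inv, div_le_iff₀ (by positivity)]
  nlinarith [mul_le_mul hδΛ hΛ (by positivity) (by positivity)]

open scoped ENNReal in
theorem one_sub_ofReal_le_card_filter_div {β : Type*} {s : Finset β} (hs : s.Nonempty)
    (p : β → Prop) [DecidablePred p] {δ : ℝ} (hδ : 0 ≤ δ)
    (h : (#{x ∈ s | ¬ p x} : ℝ) ≤ δ * #s) :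
    1 - ENNReal.ofReal δ ≤ (#{x ∈ s | p x} : ℝ≥0∞) / #s := by
  have hsplit : (#{x ∈ s | p x} : ℝ) + #{x ∈ s | ¬ p x} = #s := by
    exact_mod_cast card_filter_add_card_filter_not p
  have hs0 : (0 : ℝ) < #s := by exact_mod_cast hs.card_pos
  rw [← ENNReal.ofReal_one, ← ENNReal.ofReal_sub _ hδ, ← ENNReal.ofReal_natCast,
    ← ENNReal.ofReal_natCast, ← ENNReal.ofReal_div_of_pos hs0]
  exact ENNReal.ofReal_le_ofReal ((le_div_iff₀ hs0).2 (by linarith))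

section VCDimension

variable {α : Type*} [Fintype α] [DecidableEq α]

theorem card_le_succ_pow_vcDim (𝒜 : Finset (Finset α)) :
    #𝒜 ≤ (Fintype.card α + 1) ^ 𝒜.vcDim :=
  calc #𝒜 ≤ #𝒜.shatterer := card_le_card_shatterer 𝒜
    _ ≤ ∑ k ∈ Iic 𝒜.vcDim, (Fintype.card α).choose k := card_shatterer_le_sum_vcDim
    _ ≤ ∑ k ∈ range (𝒜.vcDim + 1),
          Fintype.card α ^ k * 1 ^ (𝒜.vcDim - k) * 𝒜.vcDim.choose k := by
        rw [Nat.range_succ_eq_Iic]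
        refine sum_le_sum fun k hk => ?_
        rw [one_pow, mul_one]
        exact (Nat.choose_le_pow _ k).trans
          (Nat.le_mul_of_pos_right _ (Nat.choose_pos (mem_Iic.1 hk)))
    _ = (Fintype.card α + 1) ^ 𝒜.vcDim := (add_pow _ _ _).symm

-- The paper's `Ṽ_π`, for `k = |π|`.
def clippedVCDim (𝒜 : Finset (Finset α)) (k : ℕ) : ℕ :=
  max 1 (min (𝒜.filter fun ρ => ρ.card = k).vcDim k)

theorem card_filter_card_eq_le_succ_pow_clippedVCDim (𝒜 : Finset (Finset α)) (k : ℕ) :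
    #{ρ ∈ 𝒜 | #ρ = k} ≤ (Fintype.card α + 1) ^ clippedVCDim 𝒜 k := by
  have hslice : #{ρ ∈ 𝒜 | #ρ = k} ≤ (Fintype.card α + 1) ^ k := by
    refine (card_le_card fun ρ hρ => mem_powersetCard_univ.2 (mem_filter.1 hρ).2).trans ?_
    rw [card_powersetCard, card_univ]
    exact (Nat.choose_le_pow _ _).trans (Nat.pow_le_pow_left (Nat.le_succ _) _)
  calc #{ρ ∈ 𝒜 | #ρ = k}
      ≤ (Fintype.card α + 1) ^ min (𝒜.filter fun ρ => ρ.card = k).vcDim k := by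
        rcases min_cases (𝒜.filter fun ρ => ρ.card = k).vcDim k with ⟨h, _⟩ | ⟨h, _⟩ <;> rw [h]
        exacts [card_le_succ_pow_vcDim _, hslice]
    _ ≤ _ := Nat.pow_le_pow_right (Nat.succ_pos _) (le_max_right _ _)

end VCDimension

section UnionBound

variable {α : Type*} [Fintype α] [DecidableEq α]

open Real in
theorem card_filter_confidenceRadius_lt_le {T : ℕ} (hT : 0 < T) (hTn : T ≤ Fintype.card α)
    {μ : α → ℝ} (hμ : ∀ i, μ i ∈ Set.Icc (-1) 1) (Q : Finset α) (V : ℕ) {L : ℝ} (hL : 0 ≤ L) :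
    (#{S ∈ powersetCard T univ | 10 * confidenceRadius (Fintype.card α) T #Q V L
        < |(Fintype.card α : ℝ) / T * ∑ i ∈ S ∩ Q, μ i - ∑ i ∈ Q, μ i|} : ℝ)
      ≤ 4 * (Fintype.card α).choose T * exp (-4 * (V * L)) := by
  have hn : 0 < Fintype.card α := hT.trans_le hTn
  have hscale : (0 : ℝ) < Fintype.card α / T := by positivity
  have hfilter : {S ∈ powersetCard T (univ : Finset α) |
        10 * confidenceRadius (Fintype.card α) T #Q V L
          < |(Fintype.card α : ℝ) / T * ∑ i ∈ S ∩ Q, μ i - ∑ i ∈ Q, μ i|}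
      = {S ∈ powersetCard T (univ : Finset α) |
        2 * 5 * (√((T : ℝ) / Fintype.card α * #Q * (V * L)) + V * L)
          < |∑ i ∈ S ∩ Q, μ i - (T : ℝ) / Fintype.card α * ∑ i ∈ Q, μ i|} := by
    refine filter_congr fun S _ => ?_
    rw [confidenceRadius_eq hn hT, show (Fintype.card α : ℝ) / T * ∑ i ∈ S ∩ Q, μ i - ∑ i ∈ Q, μ i
      = Fintype.card α / T * (∑ i ∈ S ∩ Q, μ i - T / Fintype.card α * ∑ i ∈ Q, μ i) by
        field_simp, abs_mul, abs_of_pos hscale, mul_left_comm, mul_lt_mul_iff_right₀ hscale]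
    norm_num
  rw [hfilter]
  refine (card_filter_lt_abs_sum_inter_sub_le_exp hTn (fun i _ => hμ i) (by positivity)
    (by norm_num)).trans_eq ?_
  ring_nf

open Real in
theorem card_filter_exists_confidenceRadius_lt_le {T : ℕ} (hT : 0 < T)
    (hTn : T ≤ Fintype.card α) (𝒜 : Finset (Finset α)) {μ : α → ℝ}
    (hμ : ∀ i, μ i ∈ Set.Icc (-1) 1) {L : ℝ} (hL : 0 ≤ L) (hnL : (Fintype.card α : ℝ) + 1 ≤ exp L) :
    (#{S ∈ powersetCard T univ | ∃ Q ∈ 𝒜,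
        10 * confidenceRadius (Fintype.card α) T #Q (clippedVCDim 𝒜 #Q) L
          < |(Fintype.card α : ℝ) / T * ∑ i ∈ S ∩ Q, μ i - ∑ i ∈ Q, μ i|} : ℝ)
      ≤ 4 * (Fintype.card α + 1) * exp (-3 * L) * (Fintype.card α).choose T := by
  set n := Fintype.card α
  set C : ℝ := (n.choose T : ℝ)
  have hslice (k : ℕ) : #{Q ∈ 𝒜 | #Q = k} * (4 * C * exp (-4 * (clippedVCDim 𝒜 k * L)))
      ≤ 4 * C * exp (-3 * L) := by
    have hV : (1 : ℝ) ≤ clippedVCDim 𝒜 k := by exact_mod_cast le_max_left _ _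
    have hpow : (#{Q ∈ 𝒜 | #Q = k} : ℝ) ≤ exp (clippedVCDim 𝒜 k * L) := by
      rw [exp_nat_mul]
      exact_mod_cast (Nat.cast_le.2 (card_filter_card_eq_le_succ_pow_clippedVCDim 𝒜 k)).trans
        (by push_cast; exact pow_le_pow_left₀ (by positivity) hnL _)
    calc _ ≤ exp (clippedVCDim 𝒜 k * L) * (4 * C * exp (-4 * (clippedVCDim 𝒜 k * L))) := by
          gcongr
      _ = 4 * C * exp (-3 * (clippedVCDim 𝒜 k * L)) := by
          rw [mul_left_comm, ← exp_add]; ring_nf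
      _ ≤ 4 * C * exp (-3 * L) :=
          mul_le_mul_of_nonneg_left (exp_le_exp.2 (by nlinarith)) (by positivity)
  have himage : #(𝒜.image card) ≤ n + 1 := by
    refine (card_le_card fun k hk => ?_).trans (card_range (n + 1)).le
    obtain ⟨Q, -, rfl⟩ := mem_image.1 hk
    exact mem_range.2 (Nat.lt_succ_of_le (card_le_univ Q))
  calc _ ≤ ∑ Q ∈ 𝒜, (#{S ∈ powersetCard T univ |
          10 * confidenceRadius n T #Q (clippedVCDim 𝒜 #Q) L
            < |(n : ℝ) / T * ∑ i ∈ S ∩ Q, μ i - ∑ i ∈ Q, μ i|} : ℝ) := by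
        rw [← Nat.cast_sum, Nat.cast_le]
        refine (card_le_card fun S hS => ?_).trans card_biUnion_le
        obtain ⟨hS, Q, hQ, hbad⟩ := mem_filter.1 hS
        exact mem_biUnion.2 ⟨Q, hQ, mem_filter.2 ⟨hS, hbad⟩⟩
    _ ≤ ∑ Q ∈ 𝒜, 4 * C * exp (-4 * (clippedVCDim 𝒜 #Q * L)) :=
        sum_le_sum fun Q _ => card_filter_confidenceRadius_lt_le hT hTn hμ Q _ hL
    _ = ∑ k ∈ 𝒜.image card, #{Q ∈ 𝒜 | #Q = k} * (4 * C * exp (-4 * (clippedVCDim 𝒜 k * L))) := by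
        rw [sum_comp (fun k => 4 * C * exp (-4 * (clippedVCDim 𝒜 k * L)))]
        simp_rw [nsmul_eq_mul]
    _ ≤ ∑ k ∈ 𝒜.image card, 4 * C * exp (-3 * L) := sum_le_sum fun k _ => hslice k
    _ ≤ (n + 1) * (4 * C * exp (-3 * L)) := by
        rw [sum_const, nsmul_eq_mul]
        gcongr
        exact_mod_cast himage
    _ = _ := by ring

open Real in
theorem one_sub_ofReal_le_card_filter_forall_confidenceRadius_div {T : ℕ} (hT : 0 < T)
    (hTn : T ≤ Fintype.card α) (𝒜 : Finset (Finset α)) {μ : α → ℝ}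
    (hμ : ∀ i, μ i ∈ Set.Icc (-1) 1) {δ : ℝ} (hδ : δ ∈ Set.Ioo 0 1) :
    1 - ENNReal.ofReal δ ≤ (#{S ∈ powersetCard T univ | ∀ Q ∈ 𝒜,
        |(Fintype.card α : ℝ) / T * ∑ i ∈ S ∩ Q, μ i - ∑ i ∈ Q, μ i|
          ≤ 10 * confidenceRadius (Fintype.card α) T #Q (clippedVCDim 𝒜 #Q)
            (log (exp 1 * Fintype.card α / δ))} : ENNReal) / (Fintype.card α).choose T := by
  obtain ⟨hL, hnL, hLδ⟩ := log_confidence_bounds (hT.trans_le hTn) hδ.1 hδ.2.le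
  rw [← card_univ, ← card_powersetCard]
  refine one_sub_ofReal_le_card_filter_div (powersetCard_nonempty.2 (by simpa using hTn)) _
    hδ.1.le ?_
  simp only [not_forall, not_le, exists_prop, card_powersetCard, card_univ]
  exact (card_filter_exists_confidenceRadius_lt_le hT hTn 𝒜 hμ hL hnL).trans
    (mul_le_mul_of_nonneg_right hLδ (Nat.cast_nonneg _))

end UnionBound

theorem injective_of_card_image_univ_eq {α : Type*} [DecidableEq α] {T : ℕ} {f : Fin T → α}
    (hf : #(univ.image f) = T) : Function.Injective f := fun a b h =>
  card_image_iff.1 (hf.trans (card_fin T).symm) (mem_coe.2 (mem_univ a)) (mem_coe.2 (mem_univ b)) h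

theorem sum_mul_ite_mem_eq_sum_image_inter {α : Type*} [DecidableEq α] {T : ℕ} {f : Fin T → α}
    (hf : Function.Injective f) (μ : α → ℝ) (Q : Finset α) :
    ∑ s, μ (f s) * (if f s ∈ Q then (1 : ℝ) else 0) = ∑ i ∈ univ.image f ∩ Q, μ i := by
  rw [← sum_ite_mem, sum_image fun a _ b _ h => hf h]
  simp_rw [mul_ite, mul_one, mul_zero]

section Sampling

variable {α : Type*} [Fintype α] [DecidableEq α]

theorem factorial_le_card_filter_image_eq {T : ℕ} {S : Finset α} (hS : #S = T) :
    T.factorial ≤ #{f : Fin T → α | univ.image f = S} := by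
  set e : Fin T ≃ S := (S.equivFinOfCardEq hS).symm
  calc T.factorial = #(univ : Finset (Equiv.Perm (Fin T))) := by
        rw [card_univ, Fintype.card_perm, Fintype.card_fin]
    _ ≤ _ := by
      refine card_le_card_of_injOn (fun σ i => (e (σ i) : α)) (fun σ _ => ?_)
        fun σ _ τ _ h => Equiv.ext fun i => e.injective (Subtype.ext (congrFun h i))
      refine mem_coe.2 (mem_filter.2 ⟨mem_univ _, ?_⟩)
      ext x
      simp only [mem_image, mem_univ, true_and]
      exact ⟨fun ⟨i, hi⟩ => hi ▸ (e (σ i)).2, fun hx => ⟨σ.symm (e.symm ⟨x, hx⟩), by simp⟩⟩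

-- Each `T`-subset is the image of at least `T!` injective tuples, each of probability
-- `(n - T)! / n!`.
open scoped ENNReal in
theorem card_div_choose_le_measure_image_mem [MeasurableSpace α] [MeasurableSingletonClass α]
    {Ω : Type*} [MeasureSpace Ω] {T : ℕ} (hT : T ≤ Fintype.card α) {I : Fin T → Ω → α}
    (hI : ∀ s, Measurable (I s))
    (hP : ∀ f : Fin T → α, Function.Injective f → ℙ {ω | ∀ s, I s ω = f s}
      = ((Fintype.card α - T).factorial : ℝ≥0∞) / (Fintype.card α).factorial)
    {𝒢 : Finset (Finset α)} (h𝒢 : 𝒢 ⊆ powersetCard T univ) :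
    (#𝒢 : ℝ≥0∞) / (Fintype.card α).choose T ≤ ℙ {ω | univ.image (fun s => I s ω) ∈ 𝒢} := by
  set 𝔉 : Finset (Fin T → α) := {f | univ.image f ∈ 𝒢}
  have hinj : ∀ f ∈ 𝔉, Function.Injective f := fun f hf =>
    injective_of_card_image_univ_eq (mem_powersetCard.1 (h𝒢 (mem_filter.1 hf).2)).2
  have hcard : #𝒢 * T.factorial ≤ #𝔉 := by
    rw [card_eq_sum_card_fiberwise (s := 𝔉) (t := 𝒢) fun f hf => (mem_filter.1 hf).2,
      ← smul_eq_mul, ← sum_const]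
    refine sum_le_sum fun S hS => (factorial_le_card_filter_image_eq
      (mem_powersetCard.1 (h𝒢 hS)).2).trans (card_le_card fun f hf => ?_)
    have hfS := (mem_filter.1 hf).2
    exact mem_filter.2 ⟨mem_filter.2 ⟨mem_univ f, hfS ▸ hS⟩, hfS⟩
  have hfact : ((Fintype.card α).choose T * T.factorial * (Fintype.card α - T).factorial : ℝ≥0∞)
      = (Fintype.card α).factorial := by
    exact_mod_cast Nat.choose_mul_factorial_mul_factorial hT
  calc (#𝒢 : ℝ≥0∞) / (Fintype.card α).choose T
      = #𝒢 * T.factorial * (Fintype.card α - T).factorial / (Fintype.card α).factorial := by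
        rw [← hfact, mul_assoc, mul_assoc, ENNReal.mul_div_mul_right]
        · exact mul_ne_zero (by exact_mod_cast T.factorial_ne_zero)
            (by exact_mod_cast (Fintype.card α - T).factorial_ne_zero)
        · exact ENNReal.mul_ne_top (ENNReal.natCast_ne_top _) (ENNReal.natCast_ne_top _)
    _ ≤ #𝔉 * ((Fintype.card α - T).factorial / (Fintype.card α).factorial) := by
        rw [← mul_div_assoc]
        gcongr
        exact_mod_cast hcard
    _ = ∑ f ∈ 𝔉, ℙ {ω | ∀ s, I s ω = f s} := by
        rw [sum_congr rfl fun f hf => hP f (hinj f hf), sum_const, nsmul_eq_mul]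
    _ = ℙ (⋃ f ∈ 𝔉, {ω | ∀ s, I s ω = f s}) := by
        refine (measure_biUnion_finset (fun f _ g _ hfg => ?_) fun f _ => ?_).symm
        · exact Set.disjoint_left.2 fun ω hf hg => hfg (funext fun s => (hf s).symm.trans (hg s))
        · rw [Set.ofPred_forall]
          exact MeasurableSet.iInter fun s => hI s (measurableSet_singleton _)
    _ ≤ _ := by
        refine measure_mono (Set.iUnion₂_subset fun f hf ω hω => ?_)
        show univ.image (fun s => I s ω) ∈ 𝒢
        rw [show (fun s => I s ω) = f from funext hω]
        exact (mem_filter.1 hf).2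

end Sampling

/-- There is a universal constant `c > 0` such that, in the
persistent-noise setting where indices `I_1,…,I_T` are sampled uniformly at
random without replacement from `[n]` (i.e. each injective tuple has
probability `(n−T)!/n!`) and observing index `i` reveals the deterministic
value `μ_i ∈ [−1,1]`, with probability at least `1 − δ`, simultaneously for all
`π ∈ ℱ`, `|μ̂_π − μ_π| ≤ c(√(|π|·n·Ṽ_π·ln(en/δ)/T) + n·Ṽ_π·ln(en/δ)/T)` where
`μ̂_π := (n/T)Σ_s μ_{I_s}·1{I_s ∈ π}` and `Ṽ_π := max{1, min{VC(B₁(|π|)), |π|}}`. -/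
theorem stmt8 :
    ∃ c : ℝ, 0 < c ∧
      ∀ (Ω : Type) [MeasureSpace Ω] [IsProbabilityMeasure (ℙ : Measure Ω)]
        (n T : ℕ), 1 ≤ T → T ≤ n →
        ∀ (ℱ : Finset (Finset (Fin n))) (μ : Fin n → ℝ),
        (∀ i, μ i ∈ Set.Icc (-1 : ℝ) 1) →
        ∀ δ : ℝ, δ ∈ Set.Ioo (0 : ℝ) 1 →
        ∀ I : Fin T → Ω → Fin n,
        (∀ s, Measurable (I s)) →
        (∀ f : Fin T → Fin n, Function.Injective f →
          ℙ {ω | ∀ s, I s ω = f s} = ((n - T).factorial : ENNReal) / (n.factorial : ENNReal)) →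
        1 - ENNReal.ofReal δ ≤
          ℙ {ω | ∀ π ∈ ℱ,
            |((n : ℝ) / T) * (∑ s, μ (I s ω) * (if I s ω ∈ π then (1 : ℝ) else 0))
                - ∑ i ∈ π, μ i|
              ≤ c * (Real.sqrt ((π.card : ℝ) * n *
                      ((max 1 (min ((ℱ.filter fun ρ => ρ.card = π.card).vcDim) π.card) : ℕ) : ℝ) *
                      Real.log (Real.exp 1 * n / δ) / T)
                  + (n : ℝ) *
                      ((max 1 (min ((ℱ.filter fun ρ => ρ.card = π.card).vcDim) π.card) : ℕ) : ℝ) *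
                      Real.log (Real.exp 1 * n / δ) / T)} := by
  refine ⟨10, by norm_num, ?_⟩
  intro Ω _ _ n T hT hTn ℱ μ hμ δ hδ I hI hP
  have hTn' : T ≤ Fintype.card (Fin n) := by simpa using hTn
  have hGood := one_sub_ofReal_le_card_filter_forall_confidenceRadius_div hT hTn' ℱ hμ hδ
  refine (hGood.trans (card_div_choose_le_measure_image_mem hTn' hI
    (by simp only [Fintype.card_fin]; exact hP) (filter_subset _ _))).trans
    (measure_mono fun ω hω => ?_)
  obtain ⟨hS, hgood⟩ := mem_filter.1 (Set.mem_ofPred.1 hω)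
  intro π hπ
  rw [sum_mul_ite_mem_eq_sum_image_inter
    (injective_of_card_image_univ_eq (mem_powersetCard.1 hS).2)]
  have hbound := hgood π hπ
  simp only [Fintype.card_fin] at hbound
  exact hbound
end
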